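/- For every integer n ≥ 2, the image under ρ : J_n → D_n ⋊ S_n of the pure cactus group PJ_n is contained in the subgroup D_n × {1}, and the induced map PJ_n → D_n (taking the first coordinate of ρ) is an injective group homomorphism; that is, PJ_n embeds into the right-angled Coxeter group D_n. -/

import Mathlib

/-!
The second coordinate of `ρ` is the projection `s`, so `ρ` maps `PJ_n` into `D_n × {1}`, where
its first coordinate is a homomorphism. That coordinate has trivial kernel on all of `J_n`.
Write `c = s_{a₁} ⋯ s_{a_k}`; then `(ρ c).left` is spelled by the word whose `i`-th letter is
`τ` of the interval `s(s_{a₁} ⋯ s_{a_{i-1}})(aᵢ)`. By Tits' solution of the word problem in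
right-angled Coxeter groups (obtained by letting each generator act on reduced words modulo
swaps of commuting letters), a word representing `1` reduces to the empty word by swapping
adjacent commuting letters and cancelling adjacent equal ones. Each such move lifts to a
rewriting of the cactus word that does not change `c`: a swap of `τ_I, τ_J` with `I, J`
disjoint or nested is a relation (j2) or (j3), and a cancellation is (j1). Hence `c = 1`.
-/

/-- The set of intervals `[p,q]`, `1 ≤ p < q ≤ n`, indexing the generators `s_{p,q}`
of the cactus group `J_n`. -/
def cactusSet (n : ℕ) : Set (ℕ × ℕ) := {pq | 1 ≤ pq.1 ∧ pq.1 < pq.2 ∧ pq.2 ≤ n}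

/-- The defining relations (j1)-(j3) of the cactus group, restricted to a collection `C`
of generating intervals: exactly those cactus relations involving only generators from `C`. -/
def cactusRels (C : Set (ℕ × ℕ)) : Set (FreeGroup C) :=
  {w | (∃ a : C, w = FreeGroup.of a * FreeGroup.of a) ∨
    (∃ a b : C, (a.1.2 < b.1.1 ∨ b.1.2 < a.1.1) ∧
      w = FreeGroup.of a * FreeGroup.of b * (FreeGroup.of a)⁻¹ * (FreeGroup.of b)⁻¹) ∨
    (∃ a b c : C, a.1.1 ≤ b.1.1 ∧ b.1.2 ≤ a.1.2 ∧
      c.1.1 = a.1.1 + a.1.2 - b.1.2 ∧ c.1.2 = a.1.1 + a.1.2 - b.1.1 ∧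
      w = FreeGroup.of a * FreeGroup.of b * (FreeGroup.of a)⁻¹ * (FreeGroup.of c)⁻¹)}

/-- The group presented by the generators `s_I`, `I ∈ C`, and those cactus relations
involving only these generators. -/
abbrev PartialCactusGroup (C : Set (ℕ × ℕ)) := PresentedGroup (cactusRels C)

/-- The cactus group `J_n`. -/
abbrev CactusGroup (n : ℕ) := PartialCactusGroup (cactusSet n)

/-- The involution of `{0,…,n-1}` underlying the permutation `w_{p,q}` (in `1`-based labelling:
the point `i` corresponds to the label `i+1 ∈ {1,…,n}`): it sends a label `i` with `p ≤ i ≤ q`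
to `p + q - i` and fixes all other labels. -/
def wFun (n p q : ℕ) (i : Fin n) : Fin n :=
  if h : 1 ≤ p ∧ p ≤ (i : ℕ) + 1 ∧ (i : ℕ) + 1 ≤ q ∧ q ≤ n then
    ⟨p + q - ((i : ℕ) + 1) - 1, by omega⟩
  else i

lemma wFun_involutive (n p q : ℕ) : Function.Involutive (wFun n p q) := by
  intro i
  unfold wFun
  by_cases h : 1 ≤ p ∧ p ≤ (i : ℕ) + 1 ∧ (i : ℕ) + 1 ≤ q ∧ q ≤ n
  · rw [dif_pos h, dif_pos (by simp only [Fin.val_mk]; omega)]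
    apply Fin.ext
    simp only [Fin.val_mk]
    omega
  · rw [dif_neg h, dif_neg h]

/-- The permutation `w_{p,q}` of `{1,…,n}` (coded on `Fin n` via `i ↦ i+1`), sending `i` to
`p+q-i` for `p ≤ i ≤ q` and fixing all other points. -/
def wPerm (n p q : ℕ) : Equiv.Perm (Fin n) :=
  Function.Involutive.toPerm (wFun n p q) (wFun_involutive n p q)

lemma wPerm_apply_val (n p q : ℕ) (i : Fin n) :
    ((wPerm n p q i : Fin n) : ℕ) =
      if 1 ≤ p ∧ p ≤ (i : ℕ) + 1 ∧ (i : ℕ) + 1 ≤ q ∧ q ≤ n then p + q - ((i : ℕ) + 1) - 1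
      else i := by
  rw [wPerm, Function.Involutive.coe_toPerm]
  unfold wFun
  split_ifs with h <;> rfl

lemma wPerm_inv (n p q : ℕ) : (wPerm n p q)⁻¹ = wPerm n p q := by
  simp [wPerm, Equiv.Perm.inv_def, Function.Involutive.toPerm_symm]

lemma wPerm_rels (n : ℕ) : ∀ r ∈ cactusRels (cactusSet n),
    FreeGroup.lift (fun a : cactusSet n => wPerm n a.1.1 a.1.2) r = 1 := by
  rintro r (⟨a, rfl⟩ | ⟨a, b, hab, rfl⟩ | ⟨a, b, c, h1, h2, h3, h4, rfl⟩) <;>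
    simp only [map_mul, map_inv, FreeGroup.lift_apply_of, wPerm_inv]
  · obtain ⟨ha1, ha2, ha3⟩ := a.2
    ext i
    simp only [Equiv.Perm.mul_apply, Equiv.Perm.one_apply, wPerm_apply_val]
    split_ifs <;> omega
  · obtain ⟨ha1, ha2, ha3⟩ := a.2
    obtain ⟨hb1, hb2, hb3⟩ := b.2
    ext i
    simp only [Equiv.Perm.mul_apply, Equiv.Perm.one_apply, wPerm_apply_val]
    split_ifs <;> omega
  · obtain ⟨ha1, ha2, ha3⟩ := a.2
    obtain ⟨hb1, hb2, hb3⟩ := b.2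
    obtain ⟨hc1, hc2, hc3⟩ := c.2
    ext i
    simp only [Equiv.Perm.mul_apply, Equiv.Perm.one_apply, wPerm_apply_val]
    split_ifs <;> omega

/-- The canonical projection `s : J_n → S_n`, sending `s_{p,q}` to `w_{p,q}`. -/
def sHom (n : ℕ) : CactusGroup n →* Equiv.Perm (Fin n) :=
  PresentedGroup.toGroup (f := fun a => wPerm n a.1.1 a.1.2) (wPerm_rels n)

/-- The pure cactus group `PJ_n`, i.e. the kernel of `s : J_n → S_n`. -/
abbrev PureCactusGroup (n : ℕ) : Subgroup (CactusGroup n) := (sHom n).ker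

/-- The subset `{p, p+1, …, q}` of `{1,…,n}`, coded inside `Fin n` via `i ↦ i+1`. -/
def intervalFinset (n p q : ℕ) : Finset (Fin n) :=
  Finset.univ.filter (fun i => p ≤ (i : ℕ) + 1 ∧ (i : ℕ) + 1 ≤ q)

lemma two_le_intervalFinset_card {n p q : ℕ} (h : (p, q) ∈ cactusSet n) :
    2 ≤ (intervalFinset n p q).card := by
  obtain ⟨h1, h2, h3⟩ := h
  have hp : (⟨p - 1, by omega⟩ : Fin n) ∈ intervalFinset n p q := by
    simp only [intervalFinset, Finset.mem_filter, Finset.mem_univ, true_and]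
    omega
  have hq : (⟨q - 1, by omega⟩ : Fin n) ∈ intervalFinset n p q := by
    simp only [intervalFinset, Finset.mem_filter, Finset.mem_univ, true_and]
    omega
  have := Finset.one_lt_card.mpr ⟨_, hp, _, hq, by simp only [ne_eq, Fin.mk.injEq]; omega⟩
  omega

lemma intervalFinset_card {n p q : ℕ} (h1 : 1 ≤ p) (h3 : q ≤ n) :
    (intervalFinset n p q).card = q + 1 - p := by
  have himg : (intervalFinset n p q).image Fin.val = Finset.Ico (p - 1) q := by
    ext x
    simp only [intervalFinset, Finset.mem_image, Finset.mem_filter, Finset.mem_univ, true_and,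
      Finset.mem_Ico]
    constructor
    · rintro ⟨i, hi, rfl⟩
      omega
    · rintro ⟨hx1, hx2⟩
      exact ⟨⟨x, by omega⟩, by simp only [Fin.val_mk]; omega, rfl⟩
  have hcard : (intervalFinset n p q).card = (Finset.Ico (p - 1) q).card := by
    rw [← himg, Finset.card_image_of_injective _ Fin.val_injective]
  rw [hcard, Nat.card_Ico]
  omega

/-- Generators of the Gauss diagram group `D_n`: subsets of `{1,…,n}` of size at least `2`. -/
abbrev GaussGen (n : ℕ) := {I : Finset (Fin n) // 2 ≤ I.card}

/-- The defining relations (d1)-(d2) of the Gauss diagram group `D_n`. -/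
def gaussRels (n : ℕ) : Set (FreeGroup (GaussGen n)) :=
  {w | (∃ a : GaussGen n, w = FreeGroup.of a * FreeGroup.of a) ∨
    (∃ a b : GaussGen n, (Disjoint a.1 b.1 ∨ a.1 ⊆ b.1) ∧
      w = FreeGroup.of a * FreeGroup.of b * (FreeGroup.of a)⁻¹ * (FreeGroup.of b)⁻¹)}

/-- Mostovoy's Gauss diagram group `D_n`, a right-angled Coxeter group. -/
abbrev GaussGroup (n : ℕ) := PresentedGroup (gaussRels n)

lemma gaussRel_one {n : ℕ} {r : FreeGroup (GaussGen n)} (h : r ∈ gaussRels n) :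
    PresentedGroup.mk (gaussRels n) r = 1 :=
  (QuotientGroup.eq_one_iff _).mpr (Subgroup.subset_normalClosure h)

/-- The action of a permutation on the generators of `D_n`: `σ • τ_I = τ_{σ(I)}`. -/
def permGen (n : ℕ) (σ : Equiv.Perm (Fin n)) (a : GaussGen n) : GaussGen n :=
  ⟨a.1.image σ, by rw [Finset.card_image_of_injective _ σ.injective]; exact a.2⟩

lemma permGen_rels (n : ℕ) (σ : Equiv.Perm (Fin n)) : ∀ r ∈ gaussRels n,
    FreeGroup.lift (fun a => (PresentedGroup.of (rels := gaussRels n) (permGen n σ a))) r = 1 := by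
  rintro r (⟨a, rfl⟩ | ⟨a, b, hab, rfl⟩)
  · have h1 : (PresentedGroup.mk (gaussRels n))
        (FreeGroup.of (permGen n σ a) * FreeGroup.of (permGen n σ a)) = 1 :=
      gaussRel_one (Or.inl ⟨permGen n σ a, rfl⟩)
    rw [map_mul] at h1
    simpa [PresentedGroup.of] using h1
  · have hab' : Disjoint (permGen n σ a).1 (permGen n σ b).1 ∨
        (permGen n σ a).1 ⊆ (permGen n σ b).1 := by
      rcases hab with h | h
      · exact Or.inl ((Finset.disjoint_image σ.injective).mpr h)
      · exact Or.inr (Finset.image_subset_image h)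
    have h1 : (PresentedGroup.mk (gaussRels n))
        (FreeGroup.of (permGen n σ a) * FreeGroup.of (permGen n σ b) *
          (FreeGroup.of (permGen n σ a))⁻¹ * (FreeGroup.of (permGen n σ b))⁻¹) = 1 :=
      gaussRel_one (Or.inr ⟨permGen n σ a, permGen n σ b, hab', rfl⟩)
    rw [map_mul, map_mul, map_mul, map_inv, map_inv] at h1
    simpa [PresentedGroup.of] using h1

/-- The endomorphism of `D_n` induced by a permutation. -/
def permHom (n : ℕ) (σ : Equiv.Perm (Fin n)) : GaussGroup n →* GaussGroup n :=
  PresentedGroup.toGroup (permGen_rels n σ)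

lemma permHom_of (n : ℕ) (σ : Equiv.Perm (Fin n)) (a : GaussGen n) :
    permHom n σ (PresentedGroup.of a) = PresentedGroup.of (permGen n σ a) :=
  PresentedGroup.toGroup.of _

lemma permHom_comp (n : ℕ) (σ τ : Equiv.Perm (Fin n)) :
    (permHom n σ).comp (permHom n τ) = permHom n (σ * τ) := by
  ext x
  simp only [MonoidHom.comp_apply, permHom_of]
  congr 1
  apply Subtype.ext
  simp only [permGen, Finset.image_image]
  rfl

lemma permHom_one (n : ℕ) : permHom n 1 = MonoidHom.id (GaussGroup n) := by
  ext x
  simp only [MonoidHom.id_apply, permHom_of]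
  congr 1
  apply Subtype.ext
  simp [permGen]

lemma permHom_apply_apply (n : ℕ) (σ τ : Equiv.Perm (Fin n)) (x : GaussGroup n) :
    permHom n σ (permHom n τ x) = permHom n (σ * τ) x :=
  DFunLike.congr_fun (permHom_comp n σ τ) x

/-- The action of `S_n` on `D_n` by `σ • τ_I = τ_{σ(I)}`, as a homomorphism to automorphisms. -/
def permAut (n : ℕ) : Equiv.Perm (Fin n) →* MulAut (GaussGroup n) where
  toFun σ :=
    { toFun := permHom n σ
      invFun := permHom n σ⁻¹
      left_inv := fun x => by
        rw [permHom_apply_apply, inv_mul_cancel, permHom_one, MonoidHom.id_apply]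
      right_inv := fun x => by
        rw [permHom_apply_apply, mul_inv_cancel, permHom_one, MonoidHom.id_apply]
      map_mul' := map_mul _ }
  map_one' := by
    apply MulEquiv.ext
    intro x
    simp only [MulEquiv.coe_mk, Equiv.coe_fn_mk]
    rw [permHom_one]
    rfl
  map_mul' := fun σ τ => by
    apply MulEquiv.ext
    intro x
    simp only [MulEquiv.coe_mk, Equiv.coe_fn_mk, MulAut.mul_apply]
    exact (permHom_apply_apply n σ τ x).symm


open Relation

namespace RightAngledCoxeter

variable {S : Type*} (E : S → S → Prop)

inductive Step : List S → List S → Prop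
  | swap (a b : S) (t : List S) : E a b → Step (a :: b :: t) (b :: a :: t)
  | cancel (a : S) (t : List S) : Step (a :: a :: t) t
  | cons (a : S) {t t' : List S} : Step t t' → Step (a :: t) (a :: t')

inductive Swap : List S → List S → Prop
  | swap (a b : S) (t : List S) : E a b → Swap (a :: b :: t) (b :: a :: t)
  | cons (a : S) {t t' : List S} : Swap t t' → Swap (a :: t) (a :: t')

def Visible (a : S) : List S → Prop
  | [] => False
  | b :: t => b = a ∨ (E b a ∧ Visible a t)

def Reduced : List S → Prop
  | [] => True
  | b :: t => ¬ Visible E b t ∧ Reduced t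

variable {E}

lemma Step.append_left (u : List S) {t t' : List S} (h : Step E t t') :
    Step E (u ++ t) (u ++ t') := by
  induction u with
  | nil => exact h
  | cons y u ih => exact .cons y ih

lemma step_cons_cons_iff {x y : S} {t M : List S} :
    Step E (x :: y :: t) M ↔
      (E x y ∧ M = y :: x :: t) ∨ (x = y ∧ M = t) ∨ ∃ M', Step E (y :: t) M' ∧ M = x :: M' := by
  constructor
  · rintro (⟨_, _, _, h⟩ | _ | ⟨_, h⟩)
    · exact .inl ⟨h, rfl⟩
    · exact .inr (.inl ⟨rfl, rfl⟩)
    · exact .inr (.inr ⟨_, h, rfl⟩)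
  · rintro (⟨h, rfl⟩ | ⟨rfl, rfl⟩ | ⟨M', h, rfl⟩)
    exacts [.swap x y _ h, .cancel x _, .cons x h]

lemma Swap.step {w w' : List S} (h : Swap E w w') : Step E w w' := by
  induction h with
  | swap a b t hab => exact .swap a b t hab
  | cons a _ ih => exact .cons a ih

instance [Std.Symm E] : Std.Symm (Swap E) where
  symm _ _ h := by
    induction h with
    | swap a b t hab => exact .swap b a t (Std.Symm.symm _ _ hab)
    | cons a _ ih => exact .cons a ih

lemma Swap.length_eq {w w' : List S} (h : Swap E w w') : w.length = w'.length := by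
  induction h <;> simp [*]

lemma eq_nil_of_reflTransGen_swap {w : List S} (h : ReflTransGen (Swap E) w []) : w = [] := by
  have : w.length = 0 := by
    induction h using ReflTransGen.head_induction_on with
    | refl => rfl
    | head h _ ih => rw [h.length_eq, ih]
  exact List.eq_nil_of_length_eq_zero this

lemma reflTransGen_swap_cons_append [Std.Symm E] (a : S) {u : List S} (hu : ∀ y ∈ u, E y a)
    (t : List S) : ReflTransGen (Swap E) (a :: (u ++ t)) (u ++ a :: t) := by
  induction u with
  | nil => rfl
  | cons y u ih =>
    exact .head (.swap a y _ (Std.Symm.symm _ _ (hu y (by simp))))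
      (ReflTransGen.lift (y :: ·) (fun _ _ => Swap.cons y) _ _
        (ih fun z hz => hu z (by simp [hz])))

lemma reduced_nil : Reduced E [] := trivial

lemma Visible.of_append {a : S} {u v : List S} (hu : a ∉ u) (h : Visible E a (u ++ v)) :
    Visible E a v := by
  induction u with
  | nil => exact h
  | cons y u ih =>
    simp only [List.mem_cons, not_or] at hu
    exact ih hu.2 ((h.resolve_left (Ne.symm hu.1)).2)

lemma Visible.append_cons {a b : S} (hab : E a b) (u : List S) {v : List S}
    (h : Visible E b (u ++ v)) : Visible E b (u ++ a :: v) := by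
  induction u with
  | nil => exact .inr ⟨hab, h⟩
  | cons y u ih =>
    simp only [List.cons_append, Visible] at h ⊢
    exact h.imp_right (And.imp_right ih)

lemma Reduced.not_visible {a : S} {u v : List S} (hr : Reduced E (u ++ a :: v)) :
    ¬ Visible E a v := by
  induction u with
  | nil => exact hr.1
  | cons y u ih => exact ih hr.2

lemma Reduced.of_append_cons [Std.Symm E] {a : S} {u v : List S} (hu : ∀ y ∈ u, E y a)
    (hr : Reduced E (u ++ a :: v)) : Reduced E (u ++ v) := by
  induction u with
  | nil => exact hr.2
  | cons y u ih =>
    exact ⟨fun h => hr.1 (.append_cons (Std.Symm.symm _ _ (hu y (by simp))) u h),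
      ih (fun z hz => hu z (by simp [hz])) hr.2⟩

variable [DecidableEq S] [DecidableRel E]

variable (E) in
def eraseVisible (a : S) : List S → Option (List S)
  | [] => none
  | b :: t => if b = a then some t else if E b a then (eraseVisible a t).map (b :: ·) else none

lemma eraseVisible_eq_none_iff {a : S} {w : List S} :
    eraseVisible E a w = none ↔ ¬ Visible E a w := by
  induction w with
  | nil => simp [eraseVisible, Visible]
  | cons b t ih =>
    by_cases hba : b = a <;> by_cases hE : E b a <;> simp [eraseVisible, Visible, *]

@[simp]
lemma eraseVisible_cons_self {a : S} {t : List S} : eraseVisible E a (a :: t) = some t := by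
  simp [eraseVisible]

lemma eraseVisible_cons_eq_some_of_ne {a b : S} (hba : b ≠ a) {t w' : List S} :
    eraseVisible E a (b :: t) = some w' ↔
      E b a ∧ ∃ t', eraseVisible E a t = some t' ∧ w' = b :: t' := by
  by_cases hE : E b a <;> simp [eraseVisible, hba, hE, eq_comm]

lemma eraseVisible_eq_some {a : S} {w w' : List S} (h : eraseVisible E a w = some w') :
    ∃ u v, w = u ++ a :: v ∧ w' = u ++ v ∧ ∀ y ∈ u, E y a ∧ y ≠ a := by
  induction w generalizing w' with
  | nil => simp [eraseVisible] at h
  | cons b t ih =>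
    by_cases hba : b = a
    · rw [hba, eraseVisible_cons_self, Option.some.injEq] at h
      exact ⟨[], t, by simp [hba], by simp [h], by simp⟩
    obtain ⟨hE, t', ht', rfl⟩ := (eraseVisible_cons_eq_some_of_ne hba).mp h
    obtain ⟨u, v, rfl, rfl, hu⟩ := ih ht'
    exact ⟨b :: u, v, rfl, rfl, by simpa [hE, hba] using hu⟩

lemma eraseVisible_eq_none_of_eraseVisible_eq_some {a b : S} (hba : E b a) {w wb : List S}
    (ha : eraseVisible E a w = none) (hb : eraseVisible E b w = some wb) :
    eraseVisible E a wb = none := by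
  obtain ⟨u, v, rfl, rfl, -⟩ := eraseVisible_eq_some hb
  exact eraseVisible_eq_none_iff.mpr fun h => eraseVisible_eq_none_iff.mp ha (h.append_cons hba u)

lemma eraseVisible_comm {a b : S} (hab : a ≠ b) {w wa wb : List S}
    (ha : eraseVisible E a w = some wa) (hb : eraseVisible E b w = some wb) :
    ∃ w', eraseVisible E b wa = some w' ∧ eraseVisible E a wb = some w' := by
  induction w generalizing wa wb with
  | nil => simp [eraseVisible] at ha
  | cons c t ih =>
    by_cases hca : c = a
    · subst hca
      obtain ⟨-, tb, htb, rfl⟩ := (eraseVisible_cons_eq_some_of_ne hab).mp hb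
      rw [eraseVisible_cons_self, Option.some.injEq] at ha
      exact ⟨tb, ha ▸ htb, eraseVisible_cons_self⟩
    by_cases hcb : c = b
    · subst hcb
      obtain ⟨-, ta, hta, rfl⟩ := (eraseVisible_cons_eq_some_of_ne hca).mp ha
      rw [eraseVisible_cons_self, Option.some.injEq] at hb
      exact ⟨ta, eraseVisible_cons_self, hb ▸ hta⟩
    obtain ⟨hEa, ta, hta, rfl⟩ := (eraseVisible_cons_eq_some_of_ne hca).mp ha
    obtain ⟨hEb, tb, htb, rfl⟩ := (eraseVisible_cons_eq_some_of_ne hcb).mp hb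
    obtain ⟨w', h₁, h₂⟩ := ih hta htb
    exact ⟨c :: w', (eraseVisible_cons_eq_some_of_ne hcb).mpr ⟨hEb, w', h₁, rfl⟩,
      (eraseVisible_cons_eq_some_of_ne hca).mpr ⟨hEa, w', h₂, rfl⟩⟩

lemma eraseVisible_swap [Std.Symm E] (a : S) {w w' : List S} (h : Swap E w w') :
    Option.Rel (ReflTransGen (Swap E)) (eraseVisible E a w) (eraseVisible E a w') := by
  induction h with
  | swap b c t hbc =>
    have hcb := Std.Symm.symm _ _ hbc
    rcases ht : eraseVisible E a t with _ | t'
    all_goals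
      by_cases hb : b = a <;> by_cases hc : c = a <;> by_cases hba : E b a <;>
        by_cases hca : E c a <;> simp_all [eraseVisible]
    all_goals first | exact .refl | exact .single (.swap _ _ _ ‹_›)
  | @cons c t t' h ih =>
    by_cases hc : c = a
    · simpa [hc] using Option.Rel.some (ReflTransGen.single h)
    by_cases hca : E c a
    · simp only [eraseVisible, hc, hca, if_false, if_true]
      revert ih
      generalize eraseVisible E a t = x
      generalize eraseVisible E a t' = y
      rintro (h' | _)
      · exact .some (ReflTransGen.lift (c :: ·) (fun _ _ => Swap.cons c) _ _ h')
      · exact .none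
    · simp only [eraseVisible, hc, hca, if_false]
      exact .none

variable (E) in
def act (a : S) (w : List S) : List S :=
  (eraseVisible E a w).getD (a :: w)

lemma act_of_eraseVisible_eq_none {a : S} {w : List S} (h : eraseVisible E a w = none) :
    act E a w = a :: w := by
  simp [act, h]

lemma act_of_eraseVisible_eq_some {a : S} {w w' : List S} (h : eraseVisible E a w = some w') :
    act E a w = w' := by
  simp [act, h]

lemma reflTransGen_step_act [Std.Symm E] (a : S) (w : List S) :
    ReflTransGen (Step E) (a :: w) (act E a w) := by
  rcases h : eraseVisible E a w with _ | w'
  · rw [act_of_eraseVisible_eq_none h]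
  · obtain ⟨u, v, rfl, rfl, hu⟩ := eraseVisible_eq_some h
    rw [act_of_eraseVisible_eq_some h]
    exact (ReflTransGen.mono (fun _ _ => Swap.step) _ _
      (reflTransGen_swap_cons_append a (fun y hy => (hu y hy).1) _)).tail
      (Step.append_left u (.cancel a v))

lemma Reduced.act [Std.Symm E] (a : S) {w : List S} (hr : Reduced E w) :
    Reduced E (act E a w) := by
  rcases h : eraseVisible E a w with _ | w'
  · rw [act_of_eraseVisible_eq_none h]
    exact ⟨eraseVisible_eq_none_iff.mp h, hr⟩
  · obtain ⟨u, v, rfl, rfl, hu⟩ := eraseVisible_eq_some h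
    rw [act_of_eraseVisible_eq_some h]
    exact hr.of_append_cons fun y hy => (hu y hy).1

lemma act_swap [Std.Symm E] (a : S) {w w' : List S} (h : Swap E w w') :
    ReflTransGen (Swap E) (act E a w) (act E a w') := by
  have hrel := eraseVisible_swap a h
  unfold act
  revert hrel
  generalize eraseVisible E a w = x
  generalize eraseVisible E a w' = y
  rintro (h' | _)
  · exact h'
  · exact .single (.cons a h)

lemma act_act [Std.Symm E] (a : S) {w : List S} (hr : Reduced E w) :
    ReflTransGen (Swap E) (act E a (act E a w)) w := by
  rcases h : eraseVisible E a w with _ | w'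
  · rw [act_of_eraseVisible_eq_none h, act_of_eraseVisible_eq_some eraseVisible_cons_self]
  · obtain ⟨u, v, rfl, rfl, hu⟩ := eraseVisible_eq_some h
    have hu' : a ∉ u := fun ha => (hu a ha).2 rfl
    have hnone : eraseVisible E a (u ++ v) = none :=
      eraseVisible_eq_none_iff.mpr fun hv => hr.not_visible (hv.of_append hu')
    rw [act_of_eraseVisible_eq_some h, act_of_eraseVisible_eq_none hnone]
    exact reflTransGen_swap_cons_append a (fun y hy => (hu y hy).1) v

lemma act_comm [Std.Symm E] {a b : S} (hab : E a b) (w : List S) :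
    ReflTransGen (Swap E) (act E a (act E b w)) (act E b (act E a w)) := by
  obtain rfl | hne := eq_or_ne a b
  · rfl
  have hba : E b a := Std.Symm.symm _ _ hab
  rcases ha : eraseVisible E a w with _ | wa <;> rcases hb : eraseVisible E b w with _ | wb
  · rw [act_of_eraseVisible_eq_none ha, act_of_eraseVisible_eq_none hb,
      act_of_eraseVisible_eq_none (by simp [eraseVisible, hne.symm, hba, ha]),
      act_of_eraseVisible_eq_none (by simp [eraseVisible, hne, hab, hb])]
    exact .single (.swap a b w hab)
  · rw [act_of_eraseVisible_eq_none ha, act_of_eraseVisible_eq_some hb,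
      act_of_eraseVisible_eq_none (eraseVisible_eq_none_of_eraseVisible_eq_some hba ha hb),
      act_of_eraseVisible_eq_some
        ((eraseVisible_cons_eq_some_of_ne hne).mpr ⟨hab, wb, hb, rfl⟩)]
  · rw [act_of_eraseVisible_eq_some ha, act_of_eraseVisible_eq_none hb,
      act_of_eraseVisible_eq_none (eraseVisible_eq_none_of_eraseVisible_eq_some hab hb ha),
      act_of_eraseVisible_eq_some
        ((eraseVisible_cons_eq_some_of_ne hne.symm).mpr ⟨hba, wa, ha, rfl⟩)]
  · obtain ⟨w', h₁, h₂⟩ := eraseVisible_comm hne ha hb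
    rw [act_of_eraseVisible_eq_some ha, act_of_eraseVisible_eq_some hb,
      act_of_eraseVisible_eq_some h₁, act_of_eraseVisible_eq_some h₂]

variable [Std.Symm E]

variable (E) in
def swapSetoid : Setoid {w : List S // Reduced E w} where
  r w w' := ReflTransGen (Swap E) w.1 w'.1
  iseqv := ⟨fun _ => .refl, fun h => Std.Symm.symm _ _ h, .trans⟩

variable (E) in
abbrev NormalForm := Quotient (swapSetoid E)

def actNormalForm (a : S) : NormalForm E → NormalForm E :=
  Quotient.map (fun w => ⟨act E a w.1, w.2.act a⟩)
    fun _ _ h => ReflTransGen.lift' (act E a) (fun _ _ => act_swap a) _ _ h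

lemma actNormalForm_involutive (a : S) : Function.Involutive (actNormalForm (E := E) a) :=
  Quotient.ind fun w => Quotient.sound (act_act a w.2)

def actPerm (a : S) : Equiv.Perm (NormalForm E) := (actNormalForm_involutive a).toPerm

lemma actPerm_mul_self (a : S) : actPerm (E := E) a * actPerm a = 1 :=
  Equiv.ext (actNormalForm_involutive a)

lemma actPerm_commute {a b : S} (hab : E a b) : Commute (actPerm (E := E) a) (actPerm b) :=
  Equiv.ext <| Quotient.ind fun w => Quotient.sound (act_comm hab w.1)

lemma exists_prod_actPerm_eq (L : List S) :
    ∃ w : {w : List S // Reduced E w}, (L.map actPerm).prod ⟦⟨[], reduced_nil⟩⟧ = ⟦w⟧ ∧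
      ReflTransGen (Step E) L w.1 := by
  induction L with
  | nil => exact ⟨⟨[], reduced_nil⟩, rfl, .refl⟩
  | cons a t ih =>
    obtain ⟨w, hw, ht⟩ := ih
    refine ⟨⟨act E a w.1, w.2.act a⟩, ?_, ?_⟩
    · simp only [List.map_cons, List.prod_cons, Equiv.Perm.mul_apply, hw]
      rfl
    · exact (ReflTransGen.lift (a :: ·) (fun _ _ => Step.cons a) _ _ ht).trans
        (reflTransGen_step_act a w.1)

theorem reflTransGen_step_nil_of_prod_eq_one {rels : Set (FreeGroup S)}
    (hrels : ∀ r ∈ rels, (∃ a, r = .of a * .of a) ∨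
      ∃ a b, E a b ∧ r = .of a * .of b * (.of a)⁻¹ * (.of b)⁻¹)
    {L : List S} (h : (L.map (PresentedGroup.of (rels := rels))).prod = 1) :
    ReflTransGen (Step E) L [] := by
  have hlift : ∀ r ∈ rels, FreeGroup.lift (actPerm (E := E)) r = 1 := by
    intro r hr
    rcases hrels r hr with ⟨a, rfl⟩ | ⟨a, b, hab, rfl⟩
    · simpa using actPerm_mul_self a
    · simpa [← commutatorElement_def, commutatorElement_eq_one_iff_mul_comm]
        using (actPerm_commute hab).eq
  have hprod := congrArg (PresentedGroup.toGroup hlift) h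
  simp only [map_list_prod, List.map_map, Function.comp_def, PresentedGroup.toGroup.of,
    map_one] at hprod
  obtain ⟨w, hw, hL⟩ := exists_prod_actPerm_eq (E := E) L
  rw [hprod, Equiv.Perm.one_apply] at hw
  have hnil : ReflTransGen (Swap E) w.1 [] := Quotient.exact hw.symm
  rwa [eq_nil_of_reflTransGen_swap hnil] at hL

end RightAngledCoxeter

open RightAngledCoxeter

section Intervals

variable {n p q m r : ℕ}

lemma mem_intervalFinset {i : Fin n} :
    i ∈ intervalFinset n p q ↔ p ≤ (i : ℕ) + 1 ∧ (i : ℕ) + 1 ≤ q := by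
  simp [intervalFinset]

lemma intervalFinset_subset_intervalFinset_iff (hmr : (m, r) ∈ cactusSet n) :
    intervalFinset n m r ⊆ intervalFinset n p q ↔ p ≤ m ∧ r ≤ q := by
  obtain ⟨hm, hmr, hr⟩ := hmr
  refine ⟨fun h => ?_, fun h i hi => ?_⟩
  · have hm' := h (mem_intervalFinset (i := ⟨m - 1, by omega⟩).mpr (by simp; omega))
    have hr' := h (mem_intervalFinset (i := ⟨r - 1, by omega⟩).mpr (by simp; omega))
    simp only [mem_intervalFinset] at hm' hr'
    omega
  · rw [mem_intervalFinset] at hi ⊢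
    omega

lemma disjoint_intervalFinset_iff (hpq : (p, q) ∈ cactusSet n) (hmr : (m, r) ∈ cactusSet n) :
    Disjoint (intervalFinset n p q) (intervalFinset n m r) ↔ q < m ∨ r < p := by
  obtain ⟨hp, hpq, hq⟩ := hpq
  obtain ⟨hm, hmr, hr⟩ := hmr
  rw [Finset.disjoint_left]
  refine ⟨fun h => ?_, fun h i hi hi' => ?_⟩
  · by_contra! hc
    exact h (mem_intervalFinset (i := ⟨max p m - 1, by omega⟩).mpr (by simp; omega))
      (mem_intervalFinset.mpr (by simp; omega))
  · rw [mem_intervalFinset] at hi hi'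
    omega

lemma wPerm_wPerm (i : Fin n) : wPerm n p q (wPerm n p q i) = i :=
  wFun_involutive n p q i

lemma mem_image_wPerm {s : Finset (Fin n)} {i : Fin n} :
    i ∈ s.image (wPerm n p q) ↔ wPerm n p q i ∈ s := by
  rw [Finset.mem_image]
  exact ⟨fun ⟨j, hj, hji⟩ => hji ▸ (wPerm_wPerm j).symm ▸ hj, fun h => ⟨_, h, wPerm_wPerm i⟩⟩

lemma image_wPerm_intervalFinset_of_le (hp : 1 ≤ p) (hq : q ≤ n) (hpm : p ≤ m) (hrq : r ≤ q) :
    (intervalFinset n m r).image (wPerm n p q) = intervalFinset n (p + q - r) (p + q - m) := by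
  ext i
  rw [mem_image_wPerm, mem_intervalFinset, mem_intervalFinset, wPerm_apply_val]
  split_ifs <;> omega

lemma image_wPerm_intervalFinset_of_ge (hmp : m ≤ p) (hqr : q ≤ r) :
    (intervalFinset n m r).image (wPerm n p q) = intervalFinset n m r := by
  ext i
  rw [mem_image_wPerm, mem_intervalFinset, mem_intervalFinset, wPerm_apply_val]
  split_ifs <;> omega

lemma image_wPerm_intervalFinset_of_disjoint (h : q < m ∨ r < p) :
    (intervalFinset n m r).image (wPerm n p q) = intervalFinset n m r := by
  ext i
  rw [mem_image_wPerm, mem_intervalFinset, mem_intervalFinset, wPerm_apply_val]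
  split_ifs <;> omega

end Intervals

section Generators

variable {n : ℕ}

def intervalGen (a : cactusSet n) : GaussGen n :=
  ⟨intervalFinset n a.1.1 a.1.2, two_le_intervalFinset_card a.2⟩

lemma intervalGen_injective : Function.Injective (intervalGen (n := n)) := by
  rintro ⟨⟨p, q⟩, hpq⟩ ⟨⟨m, r⟩, hmr⟩ h
  have h : intervalFinset n p q = intervalFinset n m r := congrArg Subtype.val h
  have h₁ := (intervalFinset_subset_intervalFinset_iff hpq).mp h.le
  have h₂ := (intervalFinset_subset_intervalFinset_iff hmr).mp h.ge
  simp only [Subtype.mk.injEq, Prod.mk.injEq]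
  omega

lemma sHom_of (a : cactusSet n) : sHom n (.of a) = wPerm n a.1.1 a.1.2 :=
  PresentedGroup.toGroup.of _

lemma permGen_val (σ : Equiv.Perm (Fin n)) (x : GaussGen n) :
    (permGen n σ x).1 = x.1.image σ :=
  rfl

lemma permGen_mul (σ τ : Equiv.Perm (Fin n)) (x : GaussGen n) :
    permGen n (σ * τ) x = permGen n σ (permGen n τ x) :=
  Subtype.ext <| by simp [permGen_val, Finset.image_image]

lemma permGen_injective (σ : Equiv.Perm (Fin n)) : Function.Injective (permGen n σ) :=
  fun _ _ h => Subtype.ext <| Finset.image_injective σ.injective (congrArg Subtype.val h)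

lemma permGen_sHom_intervalGen_self (a : cactusSet n) :
    permGen n (sHom n (.of a)) (intervalGen a) = intervalGen a :=
  Subtype.ext <| by
    rw [permGen_val, sHom_of]
    exact image_wPerm_intervalFinset_of_ge le_rfl le_rfl

variable (n) in
/-- The commutation graph of `D_n`: relation (d2), symmetrised. -/
def GaussCommute (x y : GaussGen n) : Prop := Disjoint x.1 y.1 ∨ x.1 ⊆ y.1 ∨ y.1 ⊆ x.1

instance : Std.Symm (GaussCommute n) where
  symm _ _ := fun
    | .inl h => .inl h.symm
    | .inr (.inl h) => .inr (.inr h)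
    | .inr (.inr h) => .inr (.inl h)

instance : DecidableRel (GaussCommute n) :=
  fun _ _ => inferInstanceAs (Decidable (_ ∨ _))

lemma gaussCommute_permGen_iff (σ : Equiv.Perm (Fin n)) {x y : GaussGen n} :
    GaussCommute n (permGen n σ x) (permGen n σ y) ↔ GaussCommute n x y := by
  simp only [GaussCommute, permGen_val, Finset.disjoint_image σ.injective,
    Finset.image_subset_image_iff σ.injective]

end Generators

section CactusRelations

variable {n : ℕ}

lemma cactus_of_mul_self (a : cactusSet n) : (.of a * .of a : CactusGroup n) = 1 :=
  PresentedGroup.one_of_mem (Or.inl ⟨a, rfl⟩)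

lemma cactus_of_inv (a : cactusSet n) : (.of a : CactusGroup n)⁻¹ = .of a :=
  inv_eq_of_mul_eq_one_right (cactus_of_mul_self a)

lemma cactus_of_mul_of_comm {a b : cactusSet n} (h : a.1.2 < b.1.1 ∨ b.1.2 < a.1.1) :
    (.of a * .of b : CactusGroup n) = .of b * .of a :=
  mul_inv_eq_iff_eq_mul.mp <|
    PresentedGroup.mk_eq_mk_of_mul_inv_mem (Or.inr (Or.inl ⟨a, b, h, rfl⟩))

lemma cactus_of_mul_of_nested {a b c : cactusSet n} (h₁ : a.1.1 ≤ b.1.1) (h₂ : b.1.2 ≤ a.1.2)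
    (h₃ : c.1.1 = a.1.1 + a.1.2 - b.1.2) (h₄ : c.1.2 = a.1.1 + a.1.2 - b.1.1) :
    (.of a * .of b : CactusGroup n) = .of c * .of a :=
  mul_inv_eq_iff_eq_mul.mp <|
    PresentedGroup.mk_eq_mk_of_mul_inv_mem (Or.inr (Or.inr ⟨a, b, c, h₁, h₂, h₃, h₄, rfl⟩))

lemma cactus_exists_list_prod_eq (c : CactusGroup n) :
    ∃ L : List (cactusSet n), (L.map PresentedGroup.of).prod = c := by
  have hc : c ∈ Subgroup.closure (Set.range PresentedGroup.of) := by simp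
  induction hc using Subgroup.closure_induction with
  | mem _ h =>
    obtain ⟨a, rfl⟩ := h
    exact ⟨[a], by simp⟩
  | one => exact ⟨[], rfl⟩
  | mul _ _ _ _ h₁ h₂ =>
    obtain ⟨L₁, rfl⟩ := h₁
    obtain ⟨L₂, rfl⟩ := h₂
    exact ⟨L₁ ++ L₂, by simp⟩
  | inv _ _ h =>
    obtain ⟨L, rfl⟩ := h
    exact ⟨L.reverse, by simp [List.prod_inv_reverse, Function.comp_def, cactus_of_inv]⟩

end CactusRelations

section Lifting

variable {n : ℕ}

/-- For `L = [a₁, …, a_k]`, the `i`-th letter is `σ s(s_{a₁} ⋯ s_{a_{i-1}}) • τ_{aᵢ}`, so that the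
word spells `σ • (ρ (s_{a₁} ⋯ s_{a_k})).left`. -/
def twistedWord (σ : Equiv.Perm (Fin n)) : List (cactusSet n) → List (GaussGen n)
  | [] => []
  | a :: L => permGen n σ (intervalGen a) :: twistedWord (σ * sHom n (.of a)) L

lemma twistedWord_eq_nil_iff {σ : Equiv.Perm (Fin n)} {L : List (cactusSet n)} :
    twistedWord σ L = [] ↔ L = [] := by
  cases L <;> simp [twistedWord]

/-- Swapping the two letters of `twistedWord σ [a, b]` is realised by a relation (j2) or (j3). -/
lemma exists_swap_of_gaussCommute {a b : cactusSet n}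
    (h : GaussCommute n (intervalGen a) (intervalGen b)) :
    ∃ a' b' : cactusSet n, (.of a * .of b : CactusGroup n) = .of b' * .of a' ∧
      intervalGen b' = permGen n (sHom n (.of a)) (intervalGen b) ∧
      permGen n (sHom n (.of b')) (intervalGen a') = intervalGen a := by
  obtain ⟨⟨p, q⟩, hpq⟩ := a
  obtain ⟨⟨m, r⟩, hmr⟩ := b
  simp only [GaussCommute, intervalGen, disjoint_intervalFinset_iff hpq hmr,
    intervalFinset_subset_intervalFinset_iff hpq,
    intervalFinset_subset_intervalFinset_iff hmr] at h
  simp only [intervalGen, Subtype.ext_iff, permGen_val, sHom_of]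
  obtain ⟨hp, hpq', hq⟩ := id hpq
  obtain ⟨hm, hmr', hr⟩ := id hmr
  rcases h with hd | ⟨hmp, hqr⟩ | ⟨hpm, hrq⟩
  · exact ⟨_, _, cactus_of_mul_of_comm hd, (image_wPerm_intervalFinset_of_disjoint hd).symm,
      image_wPerm_intervalFinset_of_disjoint hd.symm⟩
  · refine ⟨⟨(m + r - q, m + r - p), ⟨by omega, by omega, by omega⟩⟩, ⟨(m, r), hmr⟩,
      (cactus_of_mul_of_nested (show m ≤ m + r - q by omega) (show m + r - p ≤ r by omega)
        (show p = m + r - (m + r - p) by omega) (show q = m + r - (m + r - q) by omega)).symm,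
      (image_wPerm_intervalFinset_of_ge hmp hqr).symm, ?_⟩
    change (intervalFinset n (m + r - q) (m + r - p)).image (wPerm n m r) = _
    rw [image_wPerm_intervalFinset_of_le hm hr (by omega) (by omega)]
    congr 1 <;> omega
  · exact ⟨_, ⟨(p + q - r, p + q - m), ⟨by omega, by omega, by omega⟩⟩,
      cactus_of_mul_of_nested hpm hrq rfl rfl,
      (image_wPerm_intervalFinset_of_le hp hq hpm hrq).symm,
      image_wPerm_intervalFinset_of_ge (show p ≤ p + q - r by omega)
        (show p + q - m ≤ q by omega)⟩

lemma eq_of_permGen_intervalGen_eq {σ : Equiv.Perm (Fin n)} {a b : cactusSet n}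
    (h : permGen n σ (intervalGen a) = permGen n (σ * sHom n (.of a)) (intervalGen b)) :
    a = b := by
  rw [permGen_mul] at h
  have h' := permGen_injective σ h
  rw [← permGen_sHom_intervalGen_self a] at h'
  exact intervalGen_injective (permGen_injective _ h')

lemma exists_lift_step {σ : Equiv.Perm (Fin n)} {L : List (cactusSet n)} {M : List (GaussGen n)}
    (h : Step (GaussCommute n) (twistedWord σ L) M) :
    ∃ L', (L'.map PresentedGroup.of).prod = ((L.map PresentedGroup.of).prod : CactusGroup n) ∧
      twistedWord σ L' = M := by
  induction L generalizing σ M with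
  | nil => cases h
  | cons a L ih =>
    rcases L with _ | ⟨b, T⟩
    · rcases h with _ | _ | ⟨_, ⟨⟩⟩
    rw [twistedWord, twistedWord] at h
    rcases step_cons_cons_iff.mp h with ⟨hab, rfl⟩ | ⟨hab, rfl⟩ | ⟨M', h', rfl⟩
    · have hab' : GaussCommute n (intervalGen a) (intervalGen b) := by
        rwa [← gaussCommute_permGen_iff (sHom n (.of a)), permGen_sHom_intervalGen_self,
          ← gaussCommute_permGen_iff σ, ← permGen_mul]
      obtain ⟨a', b', hrel, hb', ha'⟩ := exists_swap_of_gaussCommute hab'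
      have hs : sHom n (.of b') * sHom n (.of a') = sHom n (.of a) * sHom n (.of b) := by
        rw [← map_mul, ← map_mul, hrel]
      refine ⟨b' :: a' :: T, ?_, ?_⟩
      · simp only [List.map_cons, List.prod_cons, ← mul_assoc, hrel]
      · simp only [twistedWord, permGen_mul, hb', ha', mul_assoc, hs]
    · obtain rfl := eq_of_permGen_intervalGen_eq hab
      refine ⟨T, ?_, ?_⟩
      · simp [← mul_assoc, cactus_of_mul_self]
      · rw [mul_assoc, ← map_mul, cactus_of_mul_self, map_one, mul_one]
    · obtain ⟨L', h₁, h₂⟩ := ih h'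
      exact ⟨a :: L', by simp [h₁], by rw [twistedWord, h₂]⟩

lemma exists_lift_reflTransGen {σ : Equiv.Perm (Fin n)} {L : List (cactusSet n)}
    {M : List (GaussGen n)} (h : ReflTransGen (Step (GaussCommute n)) (twistedWord σ L) M) :
    ∃ L', (L'.map PresentedGroup.of).prod = ((L.map PresentedGroup.of).prod : CactusGroup n) ∧
      twistedWord σ L' = M := by
  induction h with
  | refl => exact ⟨L, rfl, rfl⟩
  | tail _ hstep ih =>
    obtain ⟨L₁, h₁, rfl⟩ := ih
    obtain ⟨L₂, h₂, rfl⟩ := exists_lift_step hstep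
    exact ⟨L₂, h₂.trans h₁, rfl⟩

end Lifting

section Representation

variable {n : ℕ} {ρ : CactusGroup n →* GaussGroup n ⋊[permAut n] Equiv.Perm (Fin n)}

lemma right_apply_eq_sHom
    (hρ : ∀ a : cactusSet n, ρ (.of a) = ⟨.of (intervalGen a), sHom n (.of a)⟩)
    (c : CactusGroup n) : (ρ c).right = sHom n c :=
  DFunLike.congr_fun (PresentedGroup.ext (φ := SemidirectProduct.rightHom.comp ρ) fun a => by
    simp [hρ]) c

lemma permHom_left_list_prod
    (hρ : ∀ a : cactusSet n, ρ (.of a) = ⟨.of (intervalGen a), sHom n (.of a)⟩)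
    (σ : Equiv.Perm (Fin n)) (L : List (cactusSet n)) :
    permHom n σ (ρ (L.map PresentedGroup.of).prod).left =
      ((twistedWord σ L).map PresentedGroup.of).prod := by
  induction L generalizing σ with
  | nil => simp [twistedWord]
  | cons a L ih =>
    simp only [List.map_cons, List.prod_cons, map_mul, SemidirectProduct.mul_left, hρ,
      twistedWord, permHom_of, ← ih]
    rw [← permHom_apply_apply]
    rfl

lemma eq_one_of_left_eq_one
    (hρ : ∀ a : cactusSet n, ρ (.of a) = ⟨.of (intervalGen a), sHom n (.of a)⟩)
    {c : CactusGroup n} (h : (ρ c).left = 1) : c = 1 := by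
  obtain ⟨L, rfl⟩ := cactus_exists_list_prod_eq c
  have hword : ((twistedWord 1 L).map PresentedGroup.of).prod = (1 : GaussGroup n) := by
    rw [← permHom_left_list_prod hρ, h, map_one]
  have hrels : ∀ r ∈ gaussRels n, (∃ a, r = .of a * .of a) ∨
      ∃ a b, GaussCommute n a b ∧ r = .of a * .of b * (.of a)⁻¹ * (.of b)⁻¹ := by
    rintro r (h | ⟨a, b, hab, rfl⟩)
    exacts [.inl h, .inr ⟨a, b, hab.imp_right .inl, rfl⟩]
  obtain ⟨L', hL', hnil⟩ :=
    exists_lift_reflTransGen (reflTransGen_step_nil_of_prod_eq_one hrels hword)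
  rw [twistedWord_eq_nil_iff] at hnil
  rw [← hL', hnil, List.map_nil, List.prod_nil]

end Representation

theorem pure_cactus_embeds_in_racg_general (n : ℕ)
    (ρ : CactusGroup n →* SemidirectProduct (GaussGroup n) (Equiv.Perm (Fin n)) (permAut n))
    (hρ : ∀ (p q : ℕ) (h : (p, q) ∈ cactusSet n),
      ρ (PresentedGroup.of ⟨(p, q), h⟩) =
        ⟨PresentedGroup.of ⟨intervalFinset n p q, two_le_intervalFinset_card h⟩,
          wPerm n p q⟩) :
    (∀ c ∈ PureCactusGroup n, (ρ c).right = 1) ∧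
    ∃ d : ↥(PureCactusGroup n) →* GaussGroup n,
      (∀ c : ↥(PureCactusGroup n), d c = (ρ (c : CactusGroup n)).left) ∧
      Function.Injective d := by
  have hρ' : ∀ a : cactusSet n, ρ (.of a) = ⟨.of (intervalGen a), sHom n (.of a)⟩ := by
    rintro ⟨⟨p, q⟩, h⟩
    rw [hρ, sHom_of]
    rfl
  have hright : ∀ c ∈ PureCactusGroup n, (ρ c).right = 1 := fun c hc =>
    (right_apply_eq_sHom hρ' c).trans hc
  refine ⟨hright, MonoidHom.mk' (fun c => (ρ c).left) fun x y => ?_, fun _ => rfl, ?_⟩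
  · rw [Subgroup.coe_mul, map_mul, SemidirectProduct.mul_left, hright x x.2, map_one,
      MulAut.one_apply]
  · exact (injective_iff_map_eq_one _).mpr fun c hc =>
      Subtype.ext (eq_one_of_left_eq_one hρ' hc)

/-- For every `n ≥ 2` and the homomorphism `ρ : J_n → D_n ⋊ S_n` with
`ρ(s_{p,q}) = (τ_{[p,q]}, w_{p,q})`, the image of `PJ_n` under `ρ` lies in `D_n × {1}`, and
the induced map `PJ_n → D_n` is an injective group homomorphism. -/
theorem pure_cactus_embeds_in_racg (n : ℕ) (hn : 2 ≤ n)
    (ρ : CactusGroup n →* SemidirectProduct (GaussGroup n) (Equiv.Perm (Fin n)) (permAut n))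
    (hρ : ∀ (p q : ℕ) (h : (p, q) ∈ cactusSet n),
      ρ (PresentedGroup.of ⟨(p, q), h⟩) =
        ⟨PresentedGroup.of ⟨intervalFinset n p q, two_le_intervalFinset_card h⟩,
          wPerm n p q⟩) :
    (∀ c ∈ PureCactusGroup n, (ρ c).right = 1) ∧
    ∃ d : ↥(PureCactusGroup n) →* GaussGroup n,
      (∀ c : ↥(PureCactusGroup n), d c = (ρ (c : CactusGroup n)).left) ∧
      Function.Injective d :=
  pure_cactus_embeds_in_racg_general n ρ hρ
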